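/- arXiv:2001.10784 — 5 statements merged into one kernel-verified Lean document; each statement's English description precedes it below -/
import Mathlib

section
/- Let x, x⁺, x⁺⁺ ∈ E with x⁺⁺ ≠ x⁺, and set π := 2(x⁺⁺ − x⁺) + 2·(⟨x⁺ − x, x⁺⁺ − x⁺⟩ / ‖x⁺⁺ − x⁺‖²)·(x⁺⁺ − x⁺) + x. Then the perpendicular bisector H(2x⁺⁺ − x⁺, x⁺) is contained in the perpendicular bisector H(π, x). -/
open scoped RealInnerProductSpace

/-- With `π := 2(x⁺⁺ - x⁺) + 2(⟪x⁺ - x, x⁺⁺ - x⁺⟫/‖x⁺⁺ - x⁺‖²)(x⁺⁺ - x⁺) + x`, the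
perpendicular bisector `H(2x⁺⁺ - x⁺, x⁺)` is contained in `H(π, x)`. -/
theorem bisector_inclusion
    (E : Type*) [NormedAddCommGroup E] [InnerProductSpace ℝ E] [FiniteDimensional ℝ E]
    (x xp xpp : E) (hne : xpp ≠ xp)
    (π : E)
    (hπ : π = (2:ℝ) • (xpp - xp) +
      (2 * (⟪xp - x, xpp - xp⟫ / ‖xpp - xp‖ ^ 2)) • (xpp - xp) + x) :
    {u : E | ‖u - ((2:ℝ) • xpp - xp)‖ = ‖u - xp‖} ⊆ {u : E | ‖u - π‖ = ‖u - x‖} := by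
  intro u hu
  simp only [Set.mem_setOf_eq] at hu ⊢
  rw [← real_inner_add_sub_eq_zero_iff] at hu ⊢
  have hd : xpp - xp ≠ 0 := sub_ne_zero.mpr hne
  have hn : ‖xpp - xp‖ ^ 2 ≠ 0 := pow_ne_zero _ (norm_ne_zero_iff.mpr hd)
  set s : ℝ := ⟪xp - x, xpp - xp⟫ / ‖xpp - xp‖ ^ 2 with hsdef
  have hs : s * ⟪xpp - xp, xpp - xp⟫ = ⟪xp - x, xpp - xp⟫ := by
    rw [real_inner_self_eq_norm_sq, hsdef, div_mul_cancel₀ _ hn]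
  clear_value s
  -- hypothesis: ⟪u - xpp, xpp - xp⟫ = 0
  have e1 : (u - ((2:ℝ) • xpp - xp)) + (u - xp) = (2:ℝ) • (u - xpp) := by module
  have e2 : (u - ((2:ℝ) • xpp - xp)) - (u - xp) = (-2:ℝ) • (xpp - xp) := by module
  rw [e1, e2, real_inner_smul_left, real_inner_smul_right] at hu
  have hu' : ⟪u - xpp, xpp - xp⟫ = 0 := by linarith
  -- goal
  have e3 : (u - π) + (u - x) = (2:ℝ) • (u - x) - (2 + 2 * s) • (xpp - xp) := by
    rw [hπ]; module
  have e4 : (u - π) - (u - x) = (-(2 + 2 * s)) • (xpp - xp) := by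
    rw [hπ]; module
  rw [e3, e4, real_inner_smul_right, inner_sub_left, real_inner_smul_left,
    real_inner_smul_left]
  have e5 : u - x = (u - xpp) + ((xpp - xp) + (xp - x)) := by abel
  have h1 : ⟪u - x, xpp - xp⟫
      = ⟪xpp - xp, xpp - xp⟫ + ⟪xp - x, xpp - xp⟫ := by
    rw [e5, inner_add_left, inner_add_left, hu']; ring
  rw [h1]
  linear_combination (4 + 4 * s) * hs
end

section
/- If U ⊆ E is an affine subspace of a Euclidean space, T : E → E satisfies T(U) ⊆ U, and x ∈ U, then L_T x ∈ U, where L_T x is either the circumcenter of {x, 2Tx − x, π_T x} (when these are not collinear) or Tx otherwise, and π_T x := 2(T²x − Tx) + 2P_{span(T²x − Tx)}(Tx − x) + x. -/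
open scoped RealInnerProductSpace

/-- If `U` is an affine subspace with `T(U) ⊆ U` and `x ∈ U`, then `L_T x ∈ U`, where
`L_T x` is the circumcenter of `{x, 2Tx - x, π_T x}` when these are not collinear, and
`Tx` otherwise, with `π_T x = 2(T²x - Tx) + 2P_{span(T²x - Tx)}(Tx - x) + x`. -/
theorem LT_maps_affine_subspace
    (E : Type*) [NormedAddCommGroup E] [InnerProductSpace ℝ E] [FiniteDimensional ℝ E]
    (T : E → E) (U : AffineSubspace ℝ E) (hU : ∀ u ∈ U, T u ∈ U)
    (x : E) (hx : x ∈ U) (hne : T (T x) ≠ T x)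
    (π : E)
    (hπ : π = (2:ℝ) • (T (T x) - T x) +
      (2 * (⟪T x - x, T (T x) - T x⟫ / ‖T (T x) - T x‖ ^ 2)) • (T (T x) - T x) + x)
    (p : E)
    (hp₁ : ¬ Collinear ℝ ({x, (2:ℝ) • T x - x, π} : Set E) →
      p ∈ affineSpan ℝ ({x, (2:ℝ) • T x - x, π} : Set E) ∧
        dist p x = dist p ((2:ℝ) • T x - x) ∧ dist p x = dist p π)
    (hp₂ : Collinear ℝ ({x, (2:ℝ) • T x - x, π} : Set E) → p = T x) :
    p ∈ U := by
  have hTx : T x ∈ U := hU x hx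
  have hT2x : T (T x) ∈ U := hU _ hTx
  have hv : T (T x) - T x ∈ U.direction := by
    simpa using AffineSubspace.vsub_mem_direction hT2x hTx
  have hmid : (2:ℝ) • T x - x ∈ U := by
    have h : ((2:ℝ) • (T x - x)) +ᵥ x ∈ U :=
      AffineSubspace.vadd_mem_of_mem_direction
        (Submodule.smul_mem _ _
          (by simpa using AffineSubspace.vsub_mem_direction hTx hx)) hx
    have : ((2:ℝ) • (T x - x)) +ᵥ x = (2:ℝ) • T x - x := by
      simp only [vadd_eq_add]; module
    rwa [this] at h
  have hπU : π ∈ U := by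
    rw [hπ]
    have h : ((2:ℝ) • (T (T x) - T x) +
        (2 * (⟪T x - x, T (T x) - T x⟫ / ‖T (T x) - T x‖ ^ 2)) • (T (T x) - T x)) +ᵥ x ∈ U :=
      AffineSubspace.vadd_mem_of_mem_direction
        (Submodule.add_mem _ (Submodule.smul_mem _ _ hv) (Submodule.smul_mem _ _ hv)) hx
    simpa [vadd_eq_add, add_assoc] using h
  by_cases hcol : Collinear ℝ ({x, (2:ℝ) • T x - x, π} : Set E)
  · rw [hp₂ hcol]; exact hTx
  · have hsub : ({x, (2:ℝ) • T x - x, π} : Set E) ⊆ (U : Set E) := by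
      intro y hy
      rcases hy with rfl | rfl | rfl <;> assumption
    have := (hp₁ hcol).1
    exact (affineSpan_le.mpr hsub) this
end

section
/- Let f : ℝ → ℝ be given by f(y) = m·y for some m ≠ 0, let B = graph(f) ⊂ ℝ² and A = ℝ × {0}. Then V(y,ρ) := (y² + ρ²)/2 satisfies the tangency (spiraling) condition for the Douglas–Rachford operator T_{A,B}: for every x ∈ ℝ², ⟨∇V(T_{A,B}x), x − T_{A,B}x⟩ = 0. -/
/-!
`R_B ∘ R_A` is a composition of two reflections, hence an isometry `Q`, and
`T x = (Q x + x) / 2`, `x - T x = (x - Q x) / 2`. So `4 ⟪T x, x - T x⟫ = ‖x‖² - ‖Q x‖² = 0`,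
while `∇V` is the identity because `V = ‖·‖² / 2`.
-/

open scoped RealInnerProductSpace

section InnerProductSpace

variable {F : Type*} [NormedAddCommGroup F] [InnerProductSpace ℝ F]

theorem hasGradientAt_half_norm_sq [CompleteSpace F] (x : F) :
    HasGradientAt (fun y : F => ‖y‖ ^ 2 / 2) x x := by
  rw [hasGradientAt_iff_hasFDerivAt]
  simp only [div_eq_mul_inv]
  refine (HasFDerivAt.mul_const (hasStrictFDerivAt_norm_sq x).hasFDerivAt (2:ℝ)⁻¹).congr_fderiv ?_
  ext v
  simp

theorem inner_midpoint_sub_eq_zero_of_norm_eq {x y : F} (h : ‖y‖ = ‖x‖) :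
    ⟪(2:ℝ)⁻¹ • (y + x), x - (2:ℝ)⁻¹ • (y + x)⟫ = 0 := by
  have hsub : x - (2:ℝ)⁻¹ • (y + x) = (2:ℝ)⁻¹ • (x - y) := by module
  rw [hsub, inner_smul_left, inner_smul_right, add_comm,
    (real_inner_add_sub_eq_zero_iff x y).2 h.symm, mul_zero, mul_zero]

theorem inner_douglasRachford_sub_eq_zero (K L : Submodule ℝ F) [K.HasOrthogonalProjection]
    [L.HasOrthogonalProjection] (x : F) :
    ⟪(2:ℝ)⁻¹ • (L.reflection (K.reflection x) + x),
      x - (2:ℝ)⁻¹ • (L.reflection (K.reflection x) + x)⟫ = 0 :=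
  inner_midpoint_sub_eq_zero_of_norm_eq (by rw [LinearIsometryEquiv.norm_map,
    LinearIsometryEquiv.norm_map])

end InnerProductSpace

theorem WithLp.prod_norm_sq_eq_fst_sq_add_snd_sq (x : WithLp 2 (ℝ × ℝ)) :
    ‖x‖ ^ 2 = x.fst ^ 2 + x.snd ^ 2 := by
  simp [WithLp.prod_norm_sq_eq_of_L2]

theorem starProjection_span_singleton_toLp (a b : ℝ) (x : WithLp 2 (ℝ × ℝ)) :
    (ℝ ∙ WithLp.toLp 2 (a, b)).starProjection x =
      ((a * x.fst + b * x.snd) / (a ^ 2 + b ^ 2)) • WithLp.toLp 2 (a, b) := by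
  rw [Submodule.starProjection_singleton, WithLp.prod_norm_sq_eq_fst_sq_add_snd_sq,
    WithLp.prod_inner_apply]
  simp [mul_comm]

theorem two_lines_spiraling_general
    (m : ℝ)
    (PA PB RA RB T : WithLp 2 (ℝ × ℝ) → WithLp 2 (ℝ × ℝ))
    (hPA : ∀ x, PA x = (WithLp.equiv 2 (ℝ × ℝ)).symm ((WithLp.equiv 2 (ℝ × ℝ) x).1, 0))
    (hPB : ∀ x, PB x =
      (((WithLp.equiv 2 (ℝ × ℝ) x).1 + m * (WithLp.equiv 2 (ℝ × ℝ) x).2) / (1 + m ^ 2)) •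
        (WithLp.equiv 2 (ℝ × ℝ)).symm (1, m))
    (hRA : ∀ x, RA x = (2:ℝ) • PA x - x)
    (hRB : ∀ x, RB x = (2:ℝ) • PB x - x)
    (hT : ∀ x, T x = (2:ℝ)⁻¹ • (RB (RA x) + x))
    (V : WithLp 2 (ℝ × ℝ) → ℝ)
    (hV : ∀ x, V x =
      ((WithLp.equiv 2 (ℝ × ℝ) x).1 ^ 2 + (WithLp.equiv 2 (ℝ × ℝ) x).2 ^ 2) / 2)
    (x : WithLp 2 (ℝ × ℝ)) :
    ⟪gradient V (T x), x - T x⟫ = 0 := by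
  have hV_eq : V = fun y => ‖y‖ ^ 2 / 2 := by
    funext y
    rw [hV, WithLp.prod_norm_sq_eq_fst_sq_add_snd_sq]
    rfl
  have hRA_eq : ∀ y, RA y = (ℝ ∙ WithLp.toLp 2 (1, 0)).reflection y := by
    intro y
    rw [hRA, hPA, Submodule.reflection_apply, starProjection_span_singleton_toLp]
    refine WithLp.ofLp_injective 2 (Prod.ext ?_ ?_) <;> simp
  have hRB_eq : ∀ y, RB y = (ℝ ∙ WithLp.toLp 2 (1, m)).reflection y := by
    intro y
    rw [hRB, hPB, Submodule.reflection_apply, starProjection_span_singleton_toLp]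
    refine WithLp.ofLp_injective 2 (Prod.ext ?_ ?_) <;> simp
  rw [hV_eq, (hasGradientAt_half_norm_sq (T x)).gradient, hT, hRA_eq, hRB_eq]
  exact inner_douglasRachford_sub_eq_zero _ _ x

/-- For the line `A = ℝ × {0}` and the line `B = graph(y ↦ my)` (`m ≠ 0`) in `ℝ²`,
the Lyapunov function `V(y,ρ) = (y² + ρ²)/2` satisfies the spiraling condition for the
Douglas–Rachford operator `T_{A,B}`: `⟪∇V(T_{A,B}x), x - T_{A,B}x⟫ = 0` for all `x`. -/
theorem two_lines_spiraling
    (m : ℝ) (hm : m ≠ 0)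
    (PA PB RA RB T : WithLp 2 (ℝ × ℝ) → WithLp 2 (ℝ × ℝ))
    (hPA : ∀ x, PA x = (WithLp.equiv 2 (ℝ × ℝ)).symm ((WithLp.equiv 2 (ℝ × ℝ) x).1, 0))
    (hPB : ∀ x, PB x =
      (((WithLp.equiv 2 (ℝ × ℝ) x).1 + m * (WithLp.equiv 2 (ℝ × ℝ) x).2) / (1 + m ^ 2)) •
        (WithLp.equiv 2 (ℝ × ℝ)).symm (1, m))
    (hRA : ∀ x, RA x = (2:ℝ) • PA x - x)
    (hRB : ∀ x, RB x = (2:ℝ) • PB x - x)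
    (hT : ∀ x, T x = (2:ℝ)⁻¹ • (RB (RA x) + x))
    (V : WithLp 2 (ℝ × ℝ) → ℝ)
    (hV : ∀ x, V x =
      ((WithLp.equiv 2 (ℝ × ℝ) x).1 ^ 2 + (WithLp.equiv 2 (ℝ × ℝ) x).2 ^ 2) / 2)
    (x : WithLp 2 (ℝ × ℝ)) :
    ⟪gradient V (T x), x - T x⟫ = 0 :=
  two_lines_spiraling_general m PA PB RA RB T hPA hPB hRA hRB hT V hV x
end

section
/- Let A and B be two distinct lines through the origin in ℝ² that are not perpendicular, and let T = T_{A,B} be the Douglas–Rachford operator. Then for every x ∈ ℝ², L_T x ∈ Fix T_{A,B}. -/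
open scoped RealInnerProductSpace

set_option maxHeartbeats 1000000 in
/-- For two distinct non-perpendicular lines `A = span{a}`, `B = span{b}` through the origin
in `ℝ²`, and `T = T_{A,B}` the Douglas–Rachford operator, `L_T x` is a fixed point of `T`
for every `x`. -/
theorem LT_two_lines_fixed_point
    (a b : WithLp 2 (ℝ × ℝ)) (ha : a ≠ 0) (hb : b ≠ 0)
    (hdist : Submodule.span ℝ ({a} : Set (WithLp 2 (ℝ × ℝ))) ≠
      Submodule.span ℝ ({b} : Set (WithLp 2 (ℝ × ℝ))))
    (hperp : ⟪a, b⟫ ≠ 0)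
    (PA PB RA RB T : WithLp 2 (ℝ × ℝ) → WithLp 2 (ℝ × ℝ))
    (hPA : ∀ x, PA x = (⟪x, a⟫ / ‖a‖ ^ 2) • a)
    (hPB : ∀ x, PB x = (⟪x, b⟫ / ‖b‖ ^ 2) • b)
    (hRA : ∀ x, RA x = (2:ℝ) • PA x - x)
    (hRB : ∀ x, RB x = (2:ℝ) • PB x - x)
    (hT : ∀ x, T x = (2:ℝ)⁻¹ • (RB (RA x) + x))
    (x π p : WithLp 2 (ℝ × ℝ))
    (hπ : π = (2:ℝ) • (T (T x) - T x) +
      (2 * (⟪T x - x, T (T x) - T x⟫ / ‖T (T x) - T x‖ ^ 2)) • (T (T x) - T x) + x)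
    (hp₁ : ¬ Collinear ℝ ({x, (2:ℝ) • T x - x, π} : Set (WithLp 2 (ℝ × ℝ))) →
      p ∈ affineSpan ℝ ({x, (2:ℝ) • T x - x, π} : Set (WithLp 2 (ℝ × ℝ))) ∧
        dist p x = dist p ((2:ℝ) • T x - x) ∧ dist p x = dist p π)
    (hp₂ : Collinear ℝ ({x, (2:ℝ) • T x - x, π} : Set (WithLp 2 (ℝ × ℝ))) → p = T x) :
    T p = p := by
  -- component helpers
  have h1c : ∀ u v : WithLp 2 (ℝ × ℝ), (⟪u, v⟫ : ℝ) = u.fst * v.fst + u.snd * v.snd := by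
    intro u v
    simp [WithLp.prod_inner_apply, RCLike.inner_apply, conj_trivial]; ring
  have hnorm : ∀ u : WithLp 2 (ℝ × ℝ), ‖u‖ ^ 2 = u.fst ^ 2 + u.snd ^ 2 := by
    intro u
    rw [← real_inner_self_eq_norm_sq]
    rw [h1c]; ring
  have hsm1 : ∀ (r : ℝ) (u : WithLp 2 (ℝ × ℝ)), (r • u).fst = r * u.fst := fun _ _ => rfl
  have hsm2 : ∀ (r : ℝ) (u : WithLp 2 (ℝ × ℝ)), (r • u).snd = r * u.snd := fun _ _ => rfl
  have had1 : ∀ u v : WithLp 2 (ℝ × ℝ), (u + v).fst = u.fst + v.fst := fun _ _ => rfl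
  have had2 : ∀ u v : WithLp 2 (ℝ × ℝ), (u + v).snd = u.snd + v.snd := fun _ _ => rfl
  have hsb1 : ∀ u v : WithLp 2 (ℝ × ℝ), (u - v).fst = u.fst - v.fst := fun _ _ => rfl
  have hsb2 : ∀ u v : WithLp 2 (ℝ × ℝ), (u - v).snd = u.snd - v.snd := fun _ _ => rfl
  have hz1 : (0 : WithLp 2 (ℝ × ℝ)).fst = 0 := rfl
  have hz2 : (0 : WithLp 2 (ℝ × ℝ)).snd = 0 := rfl
  have hext : ∀ u v : WithLp 2 (ℝ × ℝ), u.fst = v.fst → u.snd = v.snd → u = v := by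
    intro u v h1 h2; exact WithLp.ofLp_injective 2 (Prod.ext h1 h2)
  -- nonzero quantities
  have hA2 : a.fst ^ 2 + a.snd ^ 2 ≠ 0 := by
    intro h
    apply ha
    refine hext a 0 ?_ ?_
    · rw [hz1]; nlinarith [sq_nonneg a.fst, sq_nonneg a.snd]
    · rw [hz2]; nlinarith [sq_nonneg a.fst, sq_nonneg a.snd]
  have hB2 : b.fst ^ 2 + b.snd ^ 2 ≠ 0 := by
    intro h
    apply hb
    refine hext b 0 ?_ ?_
    · rw [hz1]; nlinarith [sq_nonneg b.fst, sq_nonneg b.snd]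
    · rw [hz2]; nlinarith [sq_nonneg b.fst, sq_nonneg b.snd]
  have hc : a.fst * b.fst + a.snd * b.snd ≠ 0 := by rw [h1c] at hperp; exact hperp
  have hs : a.fst * b.snd - a.snd * b.fst ≠ 0 := by
    intro h
    apply hdist
    apply le_antisymm
    · rw [Submodule.span_le, Set.singleton_subset_iff, SetLike.mem_coe]
      refine Submodule.mem_span_singleton.2 ⟨(a.fst * b.fst + a.snd * b.snd) / (b.fst ^ 2 + b.snd ^ 2), ?_⟩
      refine hext _ _ ?_ ?_
      · rw [hsm1]; field_simp; linear_combination (-b.snd) * h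
      · rw [hsm2]; field_simp; linear_combination b.fst * h
    · rw [Submodule.span_le, Set.singleton_subset_iff, SetLike.mem_coe]
      refine Submodule.mem_span_singleton.2 ⟨(a.fst * b.fst + a.snd * b.snd) / (a.fst ^ 2 + a.snd ^ 2), ?_⟩
      refine hext _ _ ?_ ?_
      · rw [hsm1]; field_simp; linear_combination a.snd * h
      · rw [hsm2]; field_simp; linear_combination (-a.fst) * h
  -- rotation parameters
  obtain ⟨C, S, hCS, hS, hRw⟩ : ∃ C S : ℝ, C ^ 2 + S ^ 2 = 1 ∧ S ≠ 0 ∧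
      ∀ w : WithLp 2 (ℝ × ℝ), (RB (RA w)).fst = C * w.fst - S * w.snd ∧
        (RB (RA w)).snd = S * w.fst + C * w.snd := by
    refine ⟨((a.fst * b.fst + a.snd * b.snd) ^ 2 - (a.fst * b.snd - a.snd * b.fst) ^ 2) /
        ((a.fst ^ 2 + a.snd ^ 2) * (b.fst ^ 2 + b.snd ^ 2)),
      (2 * (a.fst * b.fst + a.snd * b.snd) * (a.fst * b.snd - a.snd * b.fst)) /
        ((a.fst ^ 2 + a.snd ^ 2) * (b.fst ^ 2 + b.snd ^ 2)), ?_, ?_, ?_⟩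
    · field_simp
      ring
    · exact div_ne_zero (mul_ne_zero (mul_ne_zero two_ne_zero hc) hs) (mul_ne_zero hA2 hB2)
    · intro w
      rw [hRB, hRA, hPB, hPA]
      constructor
      · simp only [h1c, hnorm, hsm1, hsm2, hsb1, hsb2, had1, had2]
        field_simp
        ring
      · simp only [h1c, hnorm, hsm1, hsm2, hsb1, hsb2, had1, had2]
        field_simp
        ring
  have hTw : ∀ w : WithLp 2 (ℝ × ℝ), (T w).fst = ((1 + C) * w.fst - S * w.snd) / 2 ∧
      (T w).snd = (S * w.fst + (1 + C) * w.snd) / 2 := by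
    intro w
    rw [hT]
    constructor
    · rw [hsm1, had1, (hRw w).1]; ring
    · rw [hsm2, had2, (hRw w).2]; ring
  have hT0 : T 0 = 0 := by
    refine hext _ _ ?_ ?_
    · rw [(hTw 0).1, hz1, hz2]; ring
    · rw [(hTw 0).2, hz1, hz2]; ring

  -- x nonzero in coordinates
  have hxx : x ≠ 0 → x.fst ^ 2 + x.snd ^ 2 ≠ 0 := by
    intro hx h
    apply hx
    refine hext x 0 ?_ ?_
    · rw [hz1]; nlinarith [sq_nonneg x.fst, sq_nonneg x.snd]
    · rw [hz2]; nlinarith [sq_nonneg x.fst, sq_nonneg x.snd]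
  have h1C : (1:ℝ) - C ≠ 0 := by
    intro h
    apply hS
    have hC1 : C = 1 := by linarith
    have hS2 : S ^ 2 = 0 := by rw [hC1] at hCS; linarith
    exact sq_eq_zero_iff.1 hS2
  have hq1 : ((2:ℝ) • T x - x).fst = C * x.fst - S * x.snd := by
    rw [hsb1, hsm1, (hTw x).1]; ring
  have hq2 : ((2:ℝ) • T x - x).snd = S * x.fst + C * x.snd := by
    rw [hsb2, hsm2, (hTw x).2]; ring
  have hu1 : (T (T x) - T x).fst = ((C ^ 2 - S ^ 2 - 1) * x.fst - 2 * C * S * x.snd) / 4 := by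
    rw [hsb1, (hTw (T x)).1, (hTw x).1, (hTw x).2]; ring
  have hu2 : (T (T x) - T x).snd = (2 * C * S * x.fst + (C ^ 2 - S ^ 2 - 1) * x.snd) / 4 := by
    rw [hsb2, (hTw (T x)).2, (hTw x).1, (hTw x).2]; ring
  have hnu : ‖T (T x) - T x‖ ^ 2 = S ^ 2 * (x.fst ^ 2 + x.snd ^ 2) / 4 := by
    rw [hnorm, hu1, hu2]
    linear_combination ((C ^ 2 + S ^ 2 - 1) * (x.fst ^ 2 + x.snd ^ 2) / 16) * hCS
  have hinn : ⟪T x - x, T (T x) - T x⟫ = ‖T (T x) - T x‖ ^ 2 := by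
    rw [h1c, hnorm, hu1, hu2, hsb1, hsb2, (hTw x).1, (hTw x).2]
    linear_combination (-((((1 + C) * x.fst - S * x.snd) / 2 - x.fst) ^ 2 +
      ((S * x.fst + (1 + C) * x.snd) / 2 - x.snd) ^ 2) / 4) * hCS
  have hn0 : x ≠ 0 → ‖T (T x) - T x‖ ^ 2 ≠ 0 := by
    intro hx h
    rw [hnu] at h
    exact (mul_ne_zero (pow_ne_zero 2 hS) (hxx hx)) (by linarith)
  have hπc : x ≠ 0 → π.fst = (C ^ 2 - S ^ 2) * x.fst - 2 * C * S * x.snd ∧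
      π.snd = 2 * C * S * x.fst + (C ^ 2 - S ^ 2) * x.snd := by
    intro hx
    have hr : 2 * (⟪T x - x, T (T x) - T x⟫ / ‖T (T x) - T x‖ ^ 2) = 2 := by
      rw [hinn, div_self (hn0 hx)]; norm_num
    constructor
    · rw [hπ, had1, had1, hsm1, hsm1, hr, hu1]; ring
    · rw [hπ, had2, had2, hsm2, hsm2, hr, hu2]; ring
  by_cases hcol : Collinear ℝ ({x, (2:ℝ) • T x - x, π} : Set (WithLp 2 (ℝ × ℝ)))
  · have hp := hp₂ hcol
    by_cases hx : x = (0 : WithLp 2 (ℝ × ℝ))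
    · rw [hp, hx, hT0]; exact hT0
    · exfalso
      obtain ⟨hπa, hπb⟩ := hπc hx
      obtain ⟨v, hv⟩ := (collinear_iff_of_mem (Set.mem_insert x _)).1 hcol
      obtain ⟨r1, hr1⟩ := hv ((2:ℝ) • T x - x) (by simp)
      obtain ⟨r2, hr2⟩ := hv π (by simp)
      have E1 : C * x.fst - S * x.snd = r1 * v.fst + x.fst := by
        rw [← hq1, hr1, vadd_eq_add, had1, hsm1]
      have E2 : S * x.fst + C * x.snd = r1 * v.snd + x.snd := by
        rw [← hq2, hr1, vadd_eq_add, had2, hsm2]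
      have F1 : (C ^ 2 - S ^ 2) * x.fst - 2 * C * S * x.snd = r2 * v.fst + x.fst := by
        rw [← hπa, hr2, vadd_eq_add, had1, hsm1]
      have F2 : 2 * C * S * x.fst + (C ^ 2 - S ^ 2) * x.snd = r2 * v.snd + x.snd := by
        rw [← hπb, hr2, vadd_eq_add, had2, hsm2]
      have key : (C * x.fst - S * x.snd - x.fst) * ((2 * C * S * x.fst + (C ^ 2 - S ^ 2) * x.snd) - x.snd) -
          (S * x.fst + C * x.snd - x.snd) * (((C ^ 2 - S ^ 2) * x.fst - 2 * C * S * x.snd) - x.fst) = 0 := by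
        rw [E1, E2, F1, F2]; ring
      have h2' : S * (2 - 2 * C) * (x.fst ^ 2 + x.snd ^ 2) = 0 := by
        linear_combination key - S * (x.fst ^ 2 + x.snd ^ 2) * hCS
      rcases mul_eq_zero.1 h2' with h | h
      · rcases mul_eq_zero.1 h with h' | h'
        · exact hS h'
        · exact h1C (by linarith)
      · exact hxx hx h
  · obtain ⟨-, hd1, hd2⟩ := hp₁ hcol
    have hx : x ≠ 0 := by
      intro hx0
      apply hcol
      subst hx0
      have hs1 : (2:ℝ) • T (0 : WithLp 2 (ℝ × ℝ)) - 0 = 0 := by rw [hT0]; simp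
      have hs2 : π = 0 := by rw [hπ, hT0, hT0]; simp
      rw [hs1, hs2]
      have hset : ({(0 : WithLp 2 (ℝ × ℝ)), 0, 0} : Set (WithLp 2 (ℝ × ℝ))) = {0} := by simp
      rw [hset]
      exact collinear_singleton ℝ _
    obtain ⟨hπa, hπb⟩ := hπc hx
    have h1 : (p.fst - x.fst) ^ 2 + (p.snd - x.snd) ^ 2 =
        (p.fst - (C * x.fst - S * x.snd)) ^ 2 + (p.snd - (S * x.fst + C * x.snd)) ^ 2 := by
      have h := congrArg (fun t : ℝ => t ^ 2) hd1
      simp only [dist_eq_norm] at h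
      simp only [hnorm, hsb1, hsb2, hsm1, hsm2, (hTw x).1, (hTw x).2] at h
      linear_combination h
    have h2 : (p.fst - x.fst) ^ 2 + (p.snd - x.snd) ^ 2 =
        (p.fst - ((C ^ 2 - S ^ 2) * x.fst - 2 * C * S * x.snd)) ^ 2 +
        (p.snd - (2 * C * S * x.fst + (C ^ 2 - S ^ 2) * x.snd)) ^ 2 := by
      have h := congrArg (fun t : ℝ => t ^ 2) hd2
      simp only [dist_eq_norm] at h
      simp only [hnorm, hsb1, hsb2, hπa, hπb] at h
      linear_combination h
    have hL1 : p.fst * ((1 - C) * x.fst + S * x.snd) + p.snd * ((1 - C) * x.snd - S * x.fst) = 0 := by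
      linear_combination (-1/2) * h1 - ((x.fst ^ 2 + x.snd ^ 2) / 2) * hCS
    have hL2a : (2 * S) * (p.fst * (S * x.fst + C * x.snd) + p.snd * (S * x.snd - C * x.fst)) = 0 := by
      linear_combination (-1/2) * h2 +
        (p.fst * x.fst + p.snd * x.snd - (C ^ 2 + S ^ 2 + 1) * (x.fst ^ 2 + x.snd ^ 2) / 2) * hCS
    have hL2 : p.fst * (S * x.fst + C * x.snd) + p.snd * (S * x.snd - C * x.fst) = 0 := by
      rcases mul_eq_zero.1 hL2a with h | h
      · exact absurd h (mul_ne_zero two_ne_zero hS)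
      · exact h
    have hdet : (1 - C) * (x.fst ^ 2 + x.snd ^ 2) ≠ 0 := mul_ne_zero h1C (hxx hx)
    have hp1 : p.fst = 0 := by
      have hh : p.fst * ((1 - C) * (x.fst ^ 2 + x.snd ^ 2)) = 0 := by
        linear_combination (S * x.snd - C * x.fst) * hL1 - ((1 - C) * x.snd - S * x.fst) * hL2 -
          p.fst * (x.fst ^ 2 + x.snd ^ 2) * hCS
      rcases mul_eq_zero.1 hh with h | h
      · exact h
      · exact absurd h hdet
    have hp2 : p.snd = 0 := by
      have hh : p.snd * ((1 - C) * (x.fst ^ 2 + x.snd ^ 2)) = 0 := by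
        linear_combination (-(S * x.fst + C * x.snd)) * hL1 + ((1 - C) * x.fst + S * x.snd) * hL2 -
          p.snd * (x.fst ^ 2 + x.snd ^ 2) * hCS
      rcases mul_eq_zero.1 hh with h | h
      · exact h
      · exact absurd h hdet
    have hp0 : p = 0 := hext p 0 (by rw [hz1]; exact hp1) (by rw [hz2]; exact hp2)
    rw [hp0]; exact hT0
end

section
/- Let f : X → ℝ be differentiable on a Euclidean space X, B = graph(f) ⊂ X × ℝ, A = X × {0}, and suppose V(y,ρ) = F(y) + ρ²/2 with ∇F(y) = (f(y)/‖∇f(y)‖²)∇f(y) wherever ∇f(y) ≠ 0. Let x = (y,ρ) with f(y) ≠ 0 and ∇f(y) ≠ 0 for the nearest point. If P_B x = (q, f(q)) with ∇f(q) ≠ 0 and the projection characterization y = q + (f(q) − ρ)∇f(q) holds, then ⟨x − P_B x, ∇V(P_B x)⟩ = 0; consequently for all μ ∈ ℝ, P_B x − μ∇V(P_B x) lies in the perpendicular bisector H(x, R_B x). -/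
open scoped RealInnerProductSpace

/-!
The projection characterization makes `x - P_B x = (f q - ρ) • (∇f q, -1)` a multiple of the
normal to the graph, while `∇V(P_B x) = c • (∇f q, ‖∇f q‖²)` with `c = f q / ‖∇f q‖²`; these two
vectors are orthogonal. Moving from `P_B x` along a direction orthogonal to `x - P_B x` keeps the
same distance to `x` and to its reflection `R_B x = 2 P_B x - x`.
-/

theorem norm_sub_smul_sub_eq_norm_sub_smul_sub_reflection {E : Type*} [NormedAddCommGroup E]
    [InnerProductSpace ℝ E] {a p v : E} (h : ⟪a - p, v⟫ = 0)
    (μ : ℝ) : ‖(p - μ • v) - a‖ = ‖(p - μ • v) - ((2 : ℝ) • p - a)‖ := by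
  have horth : ⟪μ • v, p - a⟫ = 0 := by
    rw [real_inner_smul_left, ← neg_sub, inner_neg_right, real_inner_comm, h]
    simp
  calc ‖(p - μ • v) - a‖ = ‖(p - a) - μ • v‖ := by congr 1; abel
    _ = ‖(p - a) + μ • v‖ := norm_sub_eq_norm_add horth
    _ = ‖(p - μ • v) - ((2 : ℝ) • p - a)‖ := by
      rw [← norm_neg, two_smul]; congr 1; abel

theorem inner_toLp_smul_neg_toLp_smul_norm_sq {X : Type*} [NormedAddCommGroup X]
    [InnerProductSpace ℝ X] (v : X) (t c : ℝ) :
    ⟪WithLp.toLp 2 (t • v, -t), WithLp.toLp 2 (c • v, c * ‖v‖ ^ 2)⟫ = 0 := by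
  simp only [WithLp.prod_inner_apply, real_inner_smul_left, real_inner_smul_right,
    real_inner_self_eq_norm_sq, RCLike.inner_apply, conj_trivial]
  ring

theorem graph_projection_gradient_orthogonal_general
    (X : Type*) [NormedAddCommGroup X] [InnerProductSpace ℝ X] [FiniteDimensional ℝ X]
    (f : X → ℝ)
    (V : WithLp 2 (X × ℝ) → ℝ)
    (y : X) (ρ : ℝ) (x : WithLp 2 (X × ℝ))
    (hx : x = (WithLp.equiv 2 (X × ℝ)).symm (y, ρ))
    (q : X) (hq : gradient f q ≠ 0)
    (hproj : y = q + (f q - ρ) • gradient f q)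
    (PBx : WithLp 2 (X × ℝ))
    (hPBx : PBx = (WithLp.equiv 2 (X × ℝ)).symm (q, f q))
    (hgradV : gradient V PBx =
      (WithLp.equiv 2 (X × ℝ)).symm ((f q / ‖gradient f q‖ ^ 2) • gradient f q, f q)) :
    ⟪x - PBx, gradient V PBx⟫ = 0 ∧
      ∀ μ : ℝ, ‖(PBx - μ • gradient V PBx) - x‖ =
        ‖(PBx - μ • gradient V PBx) - ((2:ℝ) • PBx - x)‖ := by
  set c := f q / ‖gradient f q‖ ^ 2
  have hnormal : x - PBx = WithLp.toLp 2 ((f q - ρ) • gradient f q, -(f q - ρ)) := by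
    subst hx hPBx hproj
    refine WithLp.ofLp_injective 2 (Prod.ext ?_ ?_) <;> simp
  have hgrad : gradient V PBx = WithLp.toLp 2 (c • gradient f q, c * ‖gradient f q‖ ^ 2) := by
    rw [hgradV, div_mul_cancel₀ _ (pow_ne_zero 2 (norm_ne_zero_iff.mpr hq))]
    rfl
  have horth : ⟪x - PBx, gradient V PBx⟫ = 0 := by
    rw [hnormal, hgrad]
    exact inner_toLp_smul_neg_toLp_smul_norm_sq _ _ _
  exact ⟨horth, norm_sub_smul_sub_eq_norm_sub_smul_sub_reflection horth⟩

/-- For `B = graph f`, if `P_B x = (q, f(q))` with the projection characterization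
`y = q + (f(q) - ρ)∇f(q)`, then `⟪x - P_B x, ∇V(P_B x)⟫ = 0`, and hence for all `μ`,
`P_B x - μ∇V(P_B x)` lies in the perpendicular bisector `H(x, R_B x)`. -/
theorem graph_projection_gradient_orthogonal
    (X : Type*) [NormedAddCommGroup X] [InnerProductSpace ℝ X] [FiniteDimensional ℝ X]
    (f F : X → ℝ) (hf : Differentiable ℝ f) (hF : Differentiable ℝ F)
    (hgradF : ∀ w, gradient f w ≠ 0 →
      gradient F w = (f w / ‖gradient f w‖ ^ 2) • gradient f w)
    (V : WithLp 2 (X × ℝ) → ℝ)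
    (hV : ∀ w : X, ∀ ρ : ℝ,
      V ((WithLp.equiv 2 (X × ℝ)).symm (w, ρ)) = F w + ρ ^ 2 / 2)
    (y : X) (ρ : ℝ) (x : WithLp 2 (X × ℝ))
    (hx : x = (WithLp.equiv 2 (X × ℝ)).symm (y, ρ))
    (hfy : f y ≠ 0)
    (q : X) (hq : gradient f q ≠ 0)
    (hproj : y = q + (f q - ρ) • gradient f q)
    (PBx : WithLp 2 (X × ℝ))
    (hPBx : PBx = (WithLp.equiv 2 (X × ℝ)).symm (q, f q))
    (hgradV : gradient V PBx =
      (WithLp.equiv 2 (X × ℝ)).symm ((f q / ‖gradient f q‖ ^ 2) • gradient f q, f q)) :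
    ⟪x - PBx, gradient V PBx⟫ = 0 ∧
      ∀ μ : ℝ, ‖(PBx - μ • gradient V PBx) - x‖ =
        ‖(PBx - μ • gradient V PBx) - ((2:ℝ) • PBx - x)‖ :=
  graph_projection_gradient_orthogonal_general X f V y ρ x hx q hq hproj PBx hPBx hgradV
end
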